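/- arXiv:2604.03739 — 6 statements merged into one kernel-verified Lean document; each statement's English description precedes it below -/
import Mathlib

section
/- Let 0 < α < 1, p > 0, a ≥ 0, λ* ∈ ℝ, and let f be continuous on [a, T]. Then for every t ∈ (a, T]: (1/(p^α Γ(α)))·∫_a^t (t^p−τ^p)^{α−1} f(τ) p τ^{p−1} dτ + (λ*/p^α)·∫_a^t (t^p−τ^p)^{2α−1} E_{α,2α}(λ*(t^p−τ^p)^α) f(τ) p τ^{p−1} dτ = (1/p^α)·∫_a^t (t^p−τ^p)^{α−1} E_{α,α}(λ*(t^p−τ^p)^α) f(τ) p τ^{p−1} dτ. In particular, the two explicit representations of the solution to the fractional relaxation equation coincide. -/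
open MeasureTheory intervalIntegral

/-- Two-parameter Mittag-Leffler function (real version):
`E_{α,β}(x) = ∑ₖ x^k / Γ(αk + β)`. -/
noncomputable def ML (α β x : ℝ) : ℝ := ∑' k : ℕ, x ^ k / Real.Gamma (α * k + β)

/-- The defining series of the Mittag-Leffler function converges absolutely. -/
lemma ML_summable {α β : ℝ} (hα : 0 < α) (hβ : 0 < β) (x : ℝ) :
    Summable fun k : ℕ => x ^ k / Real.Gamma (α * k + β) := by
  have hΓpos : ∀ k : ℕ, 0 < Real.Gamma (α * k + β) :=
    fun k => Real.Gamma_pos_of_pos (by positivity)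
  set y := |x| with hy
  have hy0 : 0 ≤ y := abs_nonneg x
  suffices h : Summable fun k : ℕ => y ^ k / Real.Gamma (α * k + β) by
    have heq : (fun k : ℕ => ‖x ^ k / Real.Gamma (α * k + β)‖)
        = fun k : ℕ => y ^ k / Real.Gamma (α * k + β) :=
      funext fun k => by
        rw [Real.norm_eq_abs, abs_div, abs_pow, abs_of_pos (hΓpos k)]
    exact Summable.of_norm (heq ▸ h)
  set A := (y + 1) ^ (1 / α) with hA
  have hy1 : (1:ℝ) ≤ y + 1 := by linarith
  have hA1 : 1 ≤ A := by
    rw [hA]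
    calc (1:ℝ) = 1 ^ (1/α) := (Real.one_rpow _).symm
    _ ≤ (y+1) ^ (1/α) := Real.rpow_le_rpow zero_le_one hy1 (by positivity)
  have hA0 : 0 < A := lt_of_lt_of_le one_pos hA1
  have hAα : A ^ α = y + 1 := by
    rw [hA, ← Real.rpow_mul (by linarith : (0:ℝ) ≤ y + 1),
      one_div_mul_cancel hα.ne', Real.rpow_one]
  set K := ⌈2 / α⌉₊ with hK
  have hKα : (2:ℝ) ≤ α * K := by
    have h1 : (2/α : ℝ) ≤ K := Nat.le_ceil _
    calc (2:ℝ) = α * (2/α) := by field_simp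
    _ ≤ α * K := by apply mul_le_mul_of_nonneg_left h1 hα.le
  set c := A ^ (α * K + β - 2) / Real.exp A with hc
  have hc0 : 0 < c := by positivity
  -- lower bound on Gamma for shifted indices
  have hΓlb : ∀ k : ℕ, (y+1) ^ k * c ≤ Real.Gamma (α * ((k : ℝ) + K) + β) := by
    intro k
    set X := α * ((k : ℝ) + K) + β with hX
    have hX2 : (2:ℝ) ≤ X := by
      have : α * (K:ℝ) ≤ α * ((k:ℝ) + K) := by
        apply mul_le_mul_of_nonneg_left _ hα.le
        · have : (0:ℝ) ≤ (k:ℝ) := Nat.cast_nonneg k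
          linarith
      nlinarith
    have hX0 : (0:ℝ) < X := by linarith
    set m := ⌊X⌋₊ with hm
    have hm2 : 2 ≤ m := Nat.le_floor (by exact_mod_cast hX2)
    have hmX : (m : ℝ) ≤ X := Nat.floor_le hX0.le
    have hXm : X < m + 1 := Nat.lt_floor_add_one X
    have hm1 : ((m - 1 : ℕ) : ℝ) = (m : ℝ) - 1 := by
      have h1 : m - 1 + 1 = m := Nat.sub_add_cancel (le_trans one_le_two hm2)
      have := congrArg (Nat.cast (R := ℝ)) h1
      push_cast at this
      linarith
    have hmono : Real.Gamma m ≤ Real.Gamma X := by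
      rcases eq_or_lt_of_le hmX with hEq | hlt
      · rw [hEq]
      · exact le_of_lt (Real.Gamma_strictMonoOn_Ici
          (Set.mem_Ici.mpr (by exact_mod_cast hm2))
          (Set.mem_Ici.mpr (by linarith)) hlt)
    have hfac : Real.Gamma m = Nat.factorial (m - 1) := by
      have h2 : (m : ℝ) = ((m - 1 : ℕ) : ℝ) + 1 := by rw [hm1]; ring
      rw [h2, Real.Gamma_nat_eq_factorial]
    have hpow : A ^ (m - 1 : ℕ) ≤ Real.exp A * Nat.factorial (m - 1) := by
      have h := Real.pow_div_factorial_le_exp A hA0.le (m - 1)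
      rw [div_le_iff₀ (by positivity)] at h
      linarith
    have hrexp : A ^ (X - 2) ≤ A ^ ((m - 1 : ℕ) : ℝ) :=
      Real.rpow_le_rpow_of_exponent_le hA1 (by rw [hm1]; linarith)
    have hsplit : A ^ (X - 2) = (y+1) ^ k * A ^ (α * K + β - 2) := by
      have h3 : X - 2 = α * k + (α * K + β - 2) := by rw [hX]; ring
      rw [h3, Real.rpow_add hA0, Real.rpow_mul hA0.le, hAα, Real.rpow_natCast]
    calc (y+1) ^ k * c = A ^ (X - 2) / Real.exp A := by rw [hc, hsplit]; ring
      _ ≤ A ^ ((m - 1 : ℕ) : ℝ) / Real.exp A := by gcongr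
      _ = A ^ (m - 1 : ℕ) / Real.exp A := by rw [Real.rpow_natCast]
      _ ≤ Nat.factorial (m - 1) := by
          rw [div_le_iff₀ (Real.exp_pos A), mul_comm]; exact hpow
      _ = Real.Gamma m := hfac.symm
      _ ≤ Real.Gamma X := hmono
  have hbound : ∀ k : ℕ, y ^ (k + K) / Real.Gamma (α * ((k + K : ℕ) : ℝ) + β)
      ≤ (y ^ K / c) * (y / (y+1)) ^ k := by
    intro k
    have hcast : ((k + K : ℕ) : ℝ) = (k : ℝ) + K := by push_cast; ring
    rw [hcast]
    have hΓk := hΓlb k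
    calc y ^ (k + K) / Real.Gamma (α * ((k:ℝ) + K) + β)
        ≤ y ^ (k + K) / ((y+1) ^ k * c) :=
          div_le_div_of_nonneg_left (by positivity) (by positivity) hΓk
      _ = (y ^ K / c) * (y ^ k / (y+1) ^ k) := by
          rw [pow_add]; field_simp
      _ = (y ^ K / c) * (y / (y+1)) ^ k := by rw [div_pow]
  have hgeom : Summable fun k : ℕ => (y ^ K / c) * (y / (y+1)) ^ k := by
    apply Summable.mul_left
    exact summable_geometric_of_lt_one (by positivity)
      ((div_lt_one (by linarith)).mpr (by linarith))
  have hsum' : Summable fun k : ℕ => y ^ (k + K) / Real.Gamma (α * ((k + K : ℕ) : ℝ) + β) :=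
    Summable.of_nonneg_of_le (fun k => by positivity) hbound hgeom
  exact (_root_.summable_nat_add_iff K).mp hsum'

/-- The Mittag-Leffler function is continuous. -/
lemma ML_continuous {α β : ℝ} (hα : 0 < α) (hβ : 0 < β) : Continuous (ML α β) := by
  have hΓpos : ∀ k : ℕ, 0 < Real.Gamma (α * k + β) :=
    fun k => Real.Gamma_pos_of_pos (by positivity)
  rw [continuous_iff_continuousAt]
  intro x₀
  set R := |x₀| + 1 with hR
  have hcontOn : ContinuousOn (ML α β) (Set.Icc (-R) R) := by
    rw [continuousOn_iff_continuous_restrict]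
    apply continuous_tsum
      (f := fun (k : ℕ) (x : Set.Icc (-R) R) => (x : ℝ) ^ k / Real.Gamma (α * k + β))
      (u := fun k : ℕ => R ^ k / Real.Gamma (α * k + β))
    · exact fun k => (continuous_subtype_val.pow k).div_const _
    · exact ML_summable hα hβ R
    · intro k x
      rw [Real.norm_eq_abs, abs_div, abs_pow, abs_of_pos (hΓpos k)]
      exact div_le_div_of_nonneg_right
        (pow_le_pow_left₀ (abs_nonneg _) (abs_le.mpr ⟨x.2.1, x.2.2⟩) k) (hΓpos k).le
  exact hcontOn.continuousAt (Icc_mem_nhds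
    (by nlinarith [abs_nonneg x₀, neg_abs_le x₀]) (by nlinarith [le_abs_self x₀]))

/-- The basic recurrence `E_{α,α}(z) = 1/Γ(α) + z E_{α,2α}(z)`. -/
lemma ML_rec {α : ℝ} (hα : 0 < α) (z : ℝ) :
    ML α α z = 1 / Real.Gamma α + z * ML α (2 * α) z := by
  have h1 : Summable fun k : ℕ => z ^ k / Real.Gamma (α * k + α) := ML_summable hα hα z
  rw [ML, Summable.tsum_eq_zero_add h1]
  have h0 : z ^ (0:ℕ) / Real.Gamma (α * (0:ℕ) + α) = 1 / Real.Gamma α := by norm_num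
  rw [h0]
  congr 1
  rw [ML, ← tsum_mul_left]
  congr 1
  funext k
  have harg : α * ((k : ℝ) + 1) + α = α * k + 2 * α := by ring
  push_cast
  rw [harg, pow_succ, mul_comm (z ^ k) z, mul_div_assoc]

/-- The weakly singular kernel `(t^p - τ^p)^r · p τ^{p-1}` is interval integrable for `r > -1`. -/
lemma ker_int {p a t r : ℝ} (hp : 0 < p) (ha : 0 ≤ a) (hat : a < t) (hr : -1 < r) :
    IntervalIntegrable (fun τ => (t ^ p - τ ^ p) ^ r * (p * τ ^ (p - 1))) volume a t := by
  have hta : a ^ p ≤ t ^ p :=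
    (Real.rpow_le_rpow ha hat.le hp.le)
  rw [intervalIntegrable_iff_integrableOn_Ioo_of_le hat.le]
  have hg : IntegrableOn (fun u => (t ^ p - u) ^ r) (Set.Ioo (a ^ p) (t ^ p)) := by
    have h1 : IntervalIntegrable (fun u : ℝ => u ^ r) volume 0 (t ^ p - a ^ p) :=
      intervalIntegrable_rpow' hr
    have h2 := (h1.comp_sub_left (t ^ p)).symm
    simp only [sub_sub_cancel, sub_zero] at h2
    rw [intervalIntegrable_iff_integrableOn_Ioo_of_le hta] at h2
    exact h2
  have hderiv : ∀ τ ∈ Set.Ioo a t,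
      HasDerivWithinAt (fun x : ℝ => x ^ p) (p * τ ^ (p - 1)) (Set.Ioo a t) τ := by
    intro τ hτ
    have hτ0 : τ ≠ 0 := (lt_of_le_of_lt ha hτ.1).ne'
    exact (Real.hasDerivAt_rpow_const (Or.inl hτ0)).hasDerivWithinAt
  have hinj : Set.InjOn (fun x : ℝ => x ^ p) (Set.Ioo a t) := by
    have hmono : StrictMonoOn (fun x : ℝ => x ^ p) (Set.Ioo a t) := fun x hx y hy hxy =>
      Real.rpow_lt_rpow (le_of_lt (lt_of_le_of_lt ha hx.1)) hxy hp
    exact hmono.injOn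
  have hsub : (fun x : ℝ => x ^ p) '' Set.Ioo a t ⊆ Set.Ioo (a ^ p) (t ^ p) := by
    rintro _ ⟨τ, hτ, rfl⟩
    exact ⟨Real.rpow_lt_rpow ha hτ.1 hp,
      Real.rpow_lt_rpow (le_of_lt (lt_of_le_of_lt ha hτ.1)) hτ.2 hp⟩
  have key := (integrableOn_image_iff_integrableOn_abs_deriv_smul measurableSet_Ioo
    hderiv hinj (fun u => (t ^ p - u) ^ r)).mp (hg.mono_set hsub)
  refine key.congr_fun (fun τ hτ => ?_) measurableSet_Ioo
  have hτ0 : 0 < τ := lt_of_le_of_lt ha hτ.1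
  have habs : |p * τ ^ (p - 1)| = p * τ ^ (p - 1) :=
    abs_of_pos (by positivity)
  simp only [smul_eq_mul, habs]
  ring

/-- The power function `x ↦ x^q` (with `q > 0`) is continuous on all of `ℝ`. -/
lemma cont_rpow_const {q : ℝ} (hq : 0 < q) : Continuous fun x : ℝ => x ^ q :=
  continuous_iff_continuousAt.mpr fun x =>
    Real.continuousAt_rpow_const x q (Or.inr hq.le)

/-- **The two explicit representations of the Duhamel term coincide.**
For `0 < α < 1`, `p > 0`, `a ≥ 0`, `λ* ∈ ℝ`, `f` continuous on `[a,T]` and `t ∈ (a,T]`: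
`(1/(p^α Γ(α))) ∫_a^t (t^p-τ^p)^{α-1} f(τ) p τ^{p-1} dτ
  + (λ*/p^α) ∫_a^t (t^p-τ^p)^{2α-1} E_{α,2α}(λ*(t^p-τ^p)^α) f(τ) p τ^{p-1} dτ
  = (1/p^α) ∫_a^t (t^p-τ^p)^{α-1} E_{α,α}(λ*(t^p-τ^p)^α) f(τ) p τ^{p-1} dτ`. -/
theorem duhamel_representations_coincide
    (α p a T lamStar : ℝ) (hα0 : 0 < α) (hα1 : α < 1) (hp : 0 < p)
    (ha : 0 ≤ a) (haT : a < T)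
    (f : ℝ → ℝ) (hf : ContinuousOn f (Set.Icc a T)) :
    ∀ t ∈ Set.Ioc a T,
      (1 / (p ^ α * Real.Gamma α)) *
          (∫ τ in a..t, (t ^ p - τ ^ p) ^ (α - 1) * f τ * (p * τ ^ (p - 1))) +
        (lamStar / p ^ α) *
          (∫ τ in a..t, (t ^ p - τ ^ p) ^ (2 * α - 1) *
            ML α (2 * α) (lamStar * (t ^ p - τ ^ p) ^ α) * f τ * (p * τ ^ (p - 1))) =
      (1 / p ^ α) *
        ∫ τ in a..t, (t ^ p - τ ^ p) ^ (α - 1) *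
          ML α α (lamStar * (t ^ p - τ ^ p) ^ α) * f τ * (p * τ ^ (p - 1)) := by
  intro t ht
  obtain ⟨hat, htT⟩ := ht
  have hfc : ContinuousOn f (Set.Icc a t) := hf.mono (Set.Icc_subset_Icc le_rfl htT)
  have hΓα : 0 < Real.Gamma α := Real.Gamma_pos_of_pos hα0
  have huIcc : Set.uIcc a t = Set.Icc a t := Set.uIcc_of_le hat.le
  -- continuity of the Mittag-Leffler composite
  have hcz : Continuous fun τ : ℝ => lamStar * (t ^ p - τ ^ p) ^ α := by
    have h2 : Continuous fun τ : ℝ => t ^ p - τ ^ p :=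
      continuous_const.sub (cont_rpow_const hp)
    exact continuous_const.mul ((cont_rpow_const hα0).comp h2)
  have hML2 : Continuous fun τ : ℝ => ML α (2 * α) (lamStar * (t ^ p - τ ^ p) ^ α) :=
    (ML_continuous hα0 (by linarith)).comp hcz
  -- integrability
  have hK1 := ker_int (r := α - 1) hp ha hat (by linarith)
  have hK2 := ker_int (r := 2 * α - 1) hp ha hat (by linarith)
  have hI1 : IntervalIntegrable
      (fun τ => (t ^ p - τ ^ p) ^ (α - 1) * f τ * (p * τ ^ (p - 1))) volume a t := by
    have h := hK1.mul_continuousOn (g := f) (by rw [huIcc]; exact hfc)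
    have heq : (fun τ => (t ^ p - τ ^ p) ^ (α - 1) * f τ * (p * τ ^ (p - 1)))
        = fun τ => ((t ^ p - τ ^ p) ^ (α - 1) * (p * τ ^ (p - 1))) * f τ :=
      funext fun τ => by ring
    rw [heq]; exact h
  have hI2 : IntervalIntegrable
      (fun τ => (t ^ p - τ ^ p) ^ (2 * α - 1) *
        ML α (2 * α) (lamStar * (t ^ p - τ ^ p) ^ α) * f τ * (p * τ ^ (p - 1))) volume a t := by
    have hc : ContinuousOn
        (fun τ => ML α (2 * α) (lamStar * (t ^ p - τ ^ p) ^ α) * f τ) (Set.uIcc a t) := by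
      rw [huIcc]; exact hML2.continuousOn.mul hfc
    have h := hK2.mul_continuousOn hc
    have heq : (fun τ => (t ^ p - τ ^ p) ^ (2 * α - 1) *
          ML α (2 * α) (lamStar * (t ^ p - τ ^ p) ^ α) * f τ * (p * τ ^ (p - 1)))
        = fun τ => ((t ^ p - τ ^ p) ^ (2 * α - 1) * (p * τ ^ (p - 1))) *
          (ML α (2 * α) (lamStar * (t ^ p - τ ^ p) ^ α) * f τ) :=
      funext fun τ => by ring
    rw [heq]; exact h
  -- the key identity between the three integrals
  have key : (∫ τ in a..t, (t ^ p - τ ^ p) ^ (α - 1) *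
        ML α α (lamStar * (t ^ p - τ ^ p) ^ α) * f τ * (p * τ ^ (p - 1)))
      = (1 / Real.Gamma α) *
          (∫ τ in a..t, (t ^ p - τ ^ p) ^ (α - 1) * f τ * (p * τ ^ (p - 1)))
        + lamStar *
          ∫ τ in a..t, (t ^ p - τ ^ p) ^ (2 * α - 1) *
            ML α (2 * α) (lamStar * (t ^ p - τ ^ p) ^ α) * f τ * (p * τ ^ (p - 1)) := by
    rw [← intervalIntegral.integral_const_mul, ← intervalIntegral.integral_const_mul,
      ← intervalIntegral.integral_add (hI1.const_mul _) (hI2.const_mul _)]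
    apply intervalIntegral.integral_congr_ae
    have hae : ∀ᵐ τ : ℝ ∂volume, τ ∈ ({t}ᶜ : Set ℝ) :=
      MeasureTheory.compl_mem_ae_iff.mpr (MeasureTheory.measure_singleton t)
    filter_upwards [hae] with τ hτt hτmem
    rw [Set.uIoc_of_le hat.le] at hτmem
    have hτa : a < τ := hτmem.1
    have hτ0 : 0 < τ := lt_of_le_of_lt ha hτa
    have hτt' : τ < t := lt_of_le_of_ne hτmem.2 hτt
    have hs : 0 < t ^ p - τ ^ p := sub_pos.mpr (Real.rpow_lt_rpow hτ0.le hτt' hp)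
    have h2a : (t ^ p - τ ^ p) ^ (2 * α - 1)
        = (t ^ p - τ ^ p) ^ (α - 1) * (t ^ p - τ ^ p) ^ α := by
      rw [← Real.rpow_add hs]; congr 1; ring
    rw [h2a, ML_rec hα0 (lamStar * (t ^ p - τ ^ p) ^ α)]
    ring
  rw [key]
  ring
end

section
/- Let 1 < β < 2 and let v : [0,1] → ℝ be continuous on [0,1] and differentiable on (0,1). If the limit lim_{x→0+} x^β v′(x) = b exists, then b = 0. -/
open Filter

open Set Real Topology in
lemma flux_pos_false (β : ℝ) (hβ1 : 1 < β)
    (v v' : ℝ → ℝ) (hv : ContinuousOn v (Set.Icc 0 1))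
    (hv' : ∀ x ∈ Set.Ioo (0 : ℝ) 1, HasDerivAt v (v' x) x)
    (b : ℝ) (hb : 0 < b)
    (hlim : Tendsto (fun x => x ^ β * v' x) (nhdsWithin 0 (Set.Ioi 0)) (nhds b)) :
    False := by
  have hev : ∀ᶠ x in 𝓝[>] (0:ℝ), b/2 < x ^ β * v' x :=
    hlim.eventually (eventually_gt_nhds (half_lt_self hb))
  obtain ⟨δ, hδ0, hδ⟩ := (nhdsGT_basis (0:ℝ)).eventually_iff.mp hev
  set d : ℝ := min δ 1 / 2 with hd
  have hd0 : 0 < d := by positivity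
  have hd1 : d < 1 := by
    have : min δ 1 ≤ 1 := min_le_right δ 1
    simp only [hd]; linarith
  have hdδ : d < δ := by
    have : min δ 1 ≤ δ := min_le_left δ 1
    simp only [hd]; linarith
  set c : ℝ := b / 2 / (β - 1) with hc
  have hc0 : 0 < c := div_pos (by linarith) (by linarith)
  set g : ℝ → ℝ := fun y => v y + c * y ^ (1 - β) with hg
  have key : ∀ x ∈ Ioo (0:ℝ) d, g x ≤ g d := by
    intro x hx
    have hcont : ContinuousOn g (Icc x d) := by
      apply ContinuousOn.add
      · exact hv.mono (fun y hy => ⟨le_trans hx.1.le hy.1, le_trans hy.2 (by linarith)⟩)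
      · exact continuousOn_const.mul (ContinuousOn.rpow_const continuous_id.continuousOn
          (fun y (hy : y ∈ Icc x d) => Or.inl (ne_of_gt (lt_of_lt_of_le hx.1 hy.1))))
    have hderiv : ∀ y ∈ Ioo x d, HasDerivAt g (v' y + c * ((1-β) * y ^ (1 - β - 1))) y := by
      intro y hy
      have hy0 : 0 < y := lt_trans hx.1 hy.1
      exact (hv' y ⟨hy0, lt_trans hy.2 hd1⟩).add
        ((Real.hasDerivAt_rpow_const (p := 1 - β) (Or.inl (ne_of_gt hy0))).const_mul c)
    obtain ⟨ξ, hξ, heq⟩ := exists_hasDerivAt_eq_slope g _ hx.2 hcont hderiv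
    have hξ0 : 0 < ξ := lt_trans hx.1 hξ.1
    have hvξ : b/2 < ξ ^ β * v' ξ := hδ ⟨hξ0, lt_trans hξ.2 hdδ⟩
    have hξβ : (0:ℝ) < ξ ^ β := Real.rpow_pos_of_pos hξ0 β
    have hpos : 0 < v' ξ + c * ((1-β) * ξ ^ (1 - β - 1)) := by
      have h1 : c * ((1-β) * ξ ^ (1 - β - 1)) = -(b/2) * ξ ^ (-β) := by
        rw [hc]
        have he : (1:ℝ) - β - 1 = -β := by ring
        rw [he]
        have hβne : β - 1 ≠ 0 := by linarith
        field_simp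
        ring
      rw [h1]
      have h2 : ξ ^ (-β) = (ξ ^ β)⁻¹ := Real.rpow_neg hξ0.le β
      rw [h2]
      have h3 : (b/2) * (ξ ^ β)⁻¹ < v' ξ := by
        rw [mul_inv_lt_iff₀' hξβ]
        linarith [hvξ]
      linarith
    have hq : 0 < (g d - g x) / (d - x) := heq ▸ hpos
    have hdx : 0 < d - x := by linarith [hx.2]
    have hmul := mul_pos hq hdx
    rw [div_mul_cancel₀ _ (ne_of_gt hdx)] at hmul
    linarith
  -- g → atTop as x → 0+
  have hvtend : Tendsto v (𝓝[>] (0:ℝ)) (𝓝 (v 0)) := by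
    have h1 : Tendsto v (𝓝[Icc 0 1] (0:ℝ)) (𝓝 (v 0)) :=
      (hv 0 ⟨le_refl 0, by norm_num⟩).tendsto
    have h2 : 𝓝[Ioo (0:ℝ) 1] 0 = 𝓝[>] (0:ℝ) := nhdsWithin_Ioo_eq_nhdsGT one_pos
    have h3 : Tendsto v (𝓝[Ioo (0:ℝ) 1] 0) (𝓝 (v 0)) :=
      h1.mono_left (nhdsWithin_mono 0 Ioo_subset_Icc_self)
    rwa [h2] at h3
  have hrt : Tendsto (fun x:ℝ => x ^ (1-β)) (𝓝[>] (0:ℝ)) atTop := by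
    have h2 := (tendsto_rpow_atTop (by linarith : (0:ℝ) < β - 1)).comp tendsto_inv_nhdsGT_zero
    refine h2.congr' ?_
    filter_upwards [self_mem_nhdsWithin] with x hx
    simp only [Function.comp]
    rw [← Real.rpow_neg_one x, ← Real.rpow_mul (le_of_lt hx)]
    congr 1; ring
  have hgt : Tendsto g (𝓝[>] (0:ℝ)) atTop :=
    hvtend.add_atTop (hrt.const_mul_atTop hc0)
  have hev2 : ∀ᶠ x in 𝓝[>] (0:ℝ), g d < g x :=
    hgt.eventually (eventually_gt_atTop (g d))
  have hev3 : ∀ᶠ x in 𝓝[>] (0:ℝ), x ∈ Ioo (0:ℝ) d :=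
    Ioo_mem_nhdsGT_of_mem ⟨le_refl 0, hd0⟩
  obtain ⟨x, hx1, hx2⟩ := (hev2.and hev3).exists
  exact absurd (key x hx2) (not_le.mpr hx1)

/-- **Vanishing of the weighted flux at the degeneration point.** Let `1 < β < 2`
and let `v` be continuous on `[0,1]` and differentiable on `(0,1)` with derivative `v'`.
If `x^β v'(x) → b` as `x → 0+`, then `b = 0`. -/
theorem weighted_flux_vanishes_at_zero (β : ℝ) (hβ1 : 1 < β) (hβ2 : β < 2)
    (v v' : ℝ → ℝ) (hv : ContinuousOn v (Set.Icc 0 1))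
    (hv' : ∀ x ∈ Set.Ioo (0 : ℝ) 1, HasDerivAt v (v' x) x)
    (b : ℝ)
    (hlim : Tendsto (fun x => x ^ β * v' x) (nhdsWithin 0 (Set.Ioi 0)) (nhds b)) :
    b = 0 := by
  by_contra hb0
  rcases lt_or_gt_of_ne hb0 with hneg | hpos
  · exact flux_pos_false β hβ1 (fun y => -v y) (fun y => -v' y) hv.neg
      (fun x hx => (hv' x hx).neg) (-b) (by linarith)
      (by
        have : (fun x => x ^ β * -v' x) = fun x => -(x ^ β * v' x) := by
          funext x; ring
        rw [this]
        exact hlim.neg)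
  · exact flux_pos_false β hβ1 v v' hv hv' b hpos hlim
end

section
/- Let 0 < β < 2 with β ≠ 1, and let v : [0,1] → ℝ be continuous on [0,1] and differentiable on (0,1] with v(1) = 0, with v′ integrable on every interval [x,1] for 0 < x ≤ 1, and with ∫_0^1 x^β (v′(x))² dx < ∞. Then ∫_0^1 v(x)² dx ≤ (1/(2−β))·∫_0^1 x^β (v′(x))² dx. -/
open MeasureTheory intervalIntegral


lemma cauchy_schwarz_integral {μ : Measure ℝ} (f g : ℝ → ℝ)
    (hf : Integrable (fun t => f t ^ 2) μ) (hg : Integrable (fun t => g t ^ 2) μ)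
    (hfg : Integrable (fun t => f t * g t) μ) :
    (∫ t, f t * g t ∂μ) ^ 2 ≤ (∫ t, f t ^ 2 ∂μ) * ∫ t, g t ^ 2 ∂μ := by
  set F := ∫ t, f t ^ 2 ∂μ
  set G := ∫ t, g t ^ 2 ∂μ
  set I := ∫ t, f t * g t ∂μ
  have key : ∀ l : ℝ, 0 ≤ F * (l * l) + (2 * I) * l + G := by
    intro l
    have h2 : (∫ t, (l * f t + g t) ^ 2 ∂μ) = l ^ 2 * F + 2 * l * I + G := by
      have h1' : Integrable (fun t => l ^ 2 * f t ^ 2 + 2 * l * (f t * g t)) μ :=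
        (hf.const_mul _).add (hfg.const_mul _)
      rw [show (fun t => (l * f t + g t) ^ 2)
          = fun t => l ^ 2 * f t ^ 2 + 2 * l * (f t * g t) + g t ^ 2 by ext t; ring]
      rw [integral_add h1' hg, integral_add (hf.const_mul _) (hfg.const_mul _),
        MeasureTheory.integral_const_mul, MeasureTheory.integral_const_mul]
    have h3 : 0 ≤ ∫ t, (l * f t + g t) ^ 2 ∂μ := integral_nonneg fun t => sq_nonneg _
    nlinarith [h2 ▸ h3]
  have := discrim_le_zero key
  rw [discrim] at this
  nlinarith


/-- **Weighted Poincaré-type inequality.** Let `0 < β < 2`, `β ≠ 1`, let `v` be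
continuous on `[0,1]` and differentiable on `(0,1]` with derivative `v'`, with
`v(1) = 0`, with `v'` integrable on every `[x,1]` for `0 < x ≤ 1`, and with
`∫_0^1 x^β (v'(x))² dx < ∞`. Then
`∫_0^1 v(x)² dx ≤ (1/(2-β)) ∫_0^1 x^β (v'(x))² dx`. -/
theorem weighted_poincare_inequality (β : ℝ) (hβ0 : 0 < β) (hβ2 : β < 2) (hβ1 : β ≠ 1)
    (v v' : ℝ → ℝ)
    (hv : ContinuousOn v (Set.Icc 0 1))
    (hv' : ∀ x ∈ Set.Ioc (0 : ℝ) 1, HasDerivWithinAt v (v' x) (Set.Ioc 0 1) x)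
    (hv1 : v 1 = 0)
    (hv'int : ∀ x ∈ Set.Ioc (0 : ℝ) 1, IntervalIntegrable v' volume x 1)
    (henergy : IntervalIntegrable (fun x => x ^ β * v' x ^ 2) volume 0 1) :
    (∫ x in (0 : ℝ)..1, v x ^ 2) ≤ (1 / (2 - β)) * ∫ x in (0 : ℝ)..1, x ^ β * v' x ^ 2 := by
  have h1β : (1 : ℝ) - β ≠ 0 := sub_ne_zero.2 (Ne.symm hβ1)
  have h2β : (2 : ℝ) - β ≠ 0 := by intro h; linarith [sub_eq_zero.1 h]
  set E := ∫ x in (0 : ℝ)..1, x ^ β * v' x ^ 2 with hEdef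
  have hsq : ∀ t : ℝ, 0 < t → (t ^ (β / 2)) ^ 2 = t ^ β := by
    intro t ht
    rw [sq, ← Real.rpow_add ht]; norm_num
  have hsqneg : ∀ t : ℝ, 0 < t → (t ^ (-(β / 2))) ^ 2 = t ^ (-β) := by
    intro t ht
    rw [sq, ← Real.rpow_add ht]; ring_nf
  have hbase : IntegrableOn (fun t : ℝ => t ^ β * v' t ^ 2) (Set.Ioc 0 1) volume := henergy.1
  -- key pointwise bound
  have hkey : ∀ x ∈ Set.Ioc (0 : ℝ) 1, v x ^ 2 ≤ (1 - x ^ (1 - β)) / (1 - β) * E := by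
    rintro x ⟨hx0, hx1⟩
    set μ := volume.restrict (Set.Ioc x 1) with hμ
    set f : ℝ → ℝ := fun t => t ^ (-(β / 2)) with hf
    set g : ℝ → ℝ := fun t => t ^ (β / 2) * v' t with hg
    have hmemIoc : ∀ᵐ t ∂μ, t ∈ Set.Ioc x 1 := ae_restrict_mem measurableSet_Ioc
    have htpos : ∀ t ∈ Set.Ioc x 1, (0:ℝ) < t := fun t ht => hx0.trans_le ht.1.le
    -- integrabilities
    have hf2 : Integrable (fun t => f t ^ 2) μ := by
      have hc : ContinuousOn (fun t => f t ^ 2) (Set.Icc x 1) := by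
        apply ContinuousOn.pow
        exact continuousOn_id.rpow_const fun t ht => Or.inl (ne_of_gt (hx0.trans_le ht.1))
      exact (hc.integrableOn_Icc).mono_set Set.Ioc_subset_Icc_self
    have hg2eq : (fun t => g t ^ 2) =ᵐ[μ] fun t => t ^ β * v' t ^ 2 := by
      filter_upwards [hmemIoc] with t ht
      simp only [hg, mul_pow, hsq t (htpos t ht)]
    have hg2 : Integrable (fun t => g t ^ 2) μ :=
      (hbase.mono_set (Set.Ioc_subset_Ioc hx0.le le_rfl)).congr hg2eq.symm
    have hfgeq : (fun t => f t * g t) =ᵐ[μ] v' := by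
      filter_upwards [hmemIoc] with t ht
      simp only [hf, hg, ← mul_assoc, ← Real.rpow_add (htpos t ht)]
      norm_num
    have hfg : Integrable (fun t => f t * g t) μ :=
      ((hv'int x ⟨hx0, hx1⟩).1).congr hfgeq.symm
    -- FTC: ∫ v' over [x,1] = -v x
    have hftc : ∫ t in x..1, v' t = v 1 - v x := by
      apply integral_eq_sub_of_hasDeriv_right_of_le hx1
        (hv.mono (Set.Icc_subset_Icc hx0.le le_rfl))
      · intro t ht
        have hmem : t ∈ Set.Ioc (0:ℝ) 1 := ⟨hx0.trans ht.1, ht.2.le⟩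
        exact ((hv' t hmem).hasDerivAt (Ioc_mem_nhds (hx0.trans ht.1) ht.2)).hasDerivWithinAt
      · exact hv'int x ⟨hx0, hx1⟩
    have hI : ∫ t, f t * g t ∂μ = - v x := by
      rw [integral_congr_ae hfgeq]
      rw [hμ, ← intervalIntegral.integral_of_le hx1, hftc, hv1]
      ring
    -- value of ∫ f²
    have hF : ∫ t, f t ^ 2 ∂μ = (1 - x ^ (1 - β)) / (1 - β) := by
      have e1 : (fun t => f t ^ 2) =ᵐ[μ] fun t => t ^ (-β) := by
        filter_upwards [hmemIoc] with t ht
        exact hsqneg t (htpos t ht)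
      rw [integral_congr_ae e1, hμ, ← intervalIntegral.integral_of_le hx1]
      rw [integral_rpow (Or.inr ⟨by intro h; exact hβ1 (by linarith [neg_eq_iff_eq_neg.1 h]),
        by rw [Set.uIcc_of_le hx1]; exact fun h => absurd h.1 (not_le.2 hx0)⟩)]
      rw [Real.one_rpow]
      have : -β + 1 = 1 - β := by ring
      rw [this]
    have hFnonneg : 0 ≤ (1 - x ^ (1 - β)) / (1 - β) := by
      rw [← hF]; exact integral_nonneg fun t => sq_nonneg _
    -- ∫ g² ≤ E
    have hG : ∫ t, g t ^ 2 ∂μ ≤ E := by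
      rw [integral_congr_ae hg2eq, hEdef, intervalIntegral.integral_of_le (by norm_num : (0:ℝ) ≤ 1)]
      apply setIntegral_mono_set hbase
      · filter_upwards [ae_restrict_mem measurableSet_Ioc] with t ht
        exact mul_nonneg (Real.rpow_nonneg ht.1.le β) (sq_nonneg _)
      · exact (Set.Ioc_subset_Ioc hx0.le le_rfl).eventuallyLE
    have hCS := cauchy_schwarz_integral f g hf2 hg2 hfg
    rw [hI, hF] at hCS
    have : v x ^ 2 = (- v x) ^ 2 := by ring
    rw [this]
    calc (- v x) ^ 2 ≤ (1 - x ^ (1 - β)) / (1 - β) * ∫ t, g t ^ 2 ∂μ := hCS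
      _ ≤ (1 - x ^ (1 - β)) / (1 - β) * E := mul_le_mul_of_nonneg_left hG hFnonneg
  -- integrabilities on [0,1]
  have hv2int : IntervalIntegrable (fun x => v x ^ 2) volume 0 1 := by
    apply ContinuousOn.intervalIntegrable
    rw [Set.uIcc_of_le (by norm_num : (0:ℝ) ≤ 1)]
    exact hv.pow 2
  have hrint : IntervalIntegrable (fun x : ℝ => x ^ (1 - β)) volume 0 1 :=
    intervalIntegrable_rpow' (by linarith)
  have hAint : IntervalIntegrable (fun x : ℝ => (1 - x ^ (1 - β)) / (1 - β) * E) volume 0 1 :=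
    ((intervalIntegrable_const.sub hrint).div_const _).mul_const _
  -- a.e. bound on [0,1]
  have hae : (fun x => v x ^ 2) ≤ᵐ[volume.restrict (Set.Icc (0:ℝ) 1)]
      fun x => (1 - x ^ (1 - β)) / (1 - β) * E := by
    have hne : ∀ᵐ x : ℝ, x ≠ 0 := by
      rw [ae_iff]
      have : {x : ℝ | ¬x ≠ 0} = {0} := by ext; simp
      rw [this]
      exact measure_singleton 0
    have hne' : ∀ᵐ x ∂volume.restrict (Set.Icc (0:ℝ) 1), x ≠ 0 :=
      hne.filter_mono (ae_mono Measure.restrict_le_self)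
    filter_upwards [hne', ae_restrict_mem measurableSet_Icc] with x hx0 hx
    exact hkey x ⟨lt_of_le_of_ne hx.1 (Ne.symm hx0), hx.2⟩
  have hmono := intervalIntegral.integral_mono_ae_restrict (by norm_num : (0:ℝ) ≤ 1)
    hv2int hAint hae
  refine hmono.trans ?_
  -- compute the right integral
  have hint1 : ∫ x in (0:ℝ)..1, x ^ (1 - β) = 1 / (2 - β) := by
    rw [integral_rpow (Or.inl (by linarith))]
    rw [Real.one_rpow, Real.zero_rpow (by intro h; apply h2β; linarith)]
    ring_nf
  have heq : (fun x : ℝ => (1 - x ^ (1 - β)) / (1 - β) * E)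
      = fun x : ℝ => E / (1 - β) - E / (1 - β) * x ^ (1 - β) := by
    ext x; field_simp
  rw [heq, intervalIntegral.integral_sub intervalIntegrable_const (hrint.const_mul _),
    intervalIntegral.integral_const, intervalIntegral.integral_const_mul, hint1]
  rw [show (1:ℝ) - 0 = 1 by norm_num, one_smul]
  have : E / (1 - β) - E / (1 - β) * (1 / (2 - β)) = 1 / (2 - β) * E := by
    field_simp
    ring
  rw [this]
end

section
/- Let 0 < β < 2 with β ≠ 1, and let v : [0,1] → ℝ be continuous on [0,1] and continuously differentiable on (0,1] with v(1) = 0, with x ↦ x^β v′(x) differentiable on (0,1), with (x^β v′)′·v integrable on (0,1), with ∫_0^1 x^β (v′(x))² dx < ∞, and suppose lim_{x→0+} x^β v′(x) v(x) = 0. Then (A v, v)_{L²(0,1)} = −∫_0^1 (x^β v′(x))′ v(x) dx ≥ (2−β)·∫_0^1 v(x)² dx; i.e. the operator A is positive definite with constant γ = 2−β. -/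
/-!
Integrating `(x^β v')' v` by parts, the boundary terms vanish and `(A v, v) = ∫₀¹ x^β v'²`.
Since `v(1) = 0`, the weighted Cauchy–Schwarz inequality gives, for `0 < x ≤ 1`,
`v(x)² = (∫ₓ¹ v')² ≤ (∫ₓ¹ t^(-β) dt) ∫ₓ¹ t^β v'² ≤ (1 - x^(1-β))/(1-β) · ∫₀¹ t^β v'²`,
and integrating over `x ∈ (0,1)` yields the factor `∫₀¹ (1 - x^(1-β))/(1-β) dx = 1/(2-β)`.
-/

open MeasureTheory intervalIntegral Filter Topology Set

theorem sq_integral_le_integral_inv_mul_integral_mul_sq {w g : ℝ → ℝ} {a b : ℝ} (hab : a ≤ b)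
    (hw : ∀ t ∈ Icc a b, 0 < w t) (hw_inv : IntervalIntegrable (fun t => (w t)⁻¹) volume a b)
    (hg : IntervalIntegrable g volume a b)
    (hwg : IntervalIntegrable (fun t => w t * g t ^ 2) volume a b) :
    (∫ t in a..b, g t) ^ 2 ≤ (∫ t in a..b, (w t)⁻¹) * ∫ t in a..b, w t * g t ^ 2 := by
  have hquad : ∀ c : ℝ, 0 ≤ (∫ t in a..b, (w t)⁻¹) * (c * c) + (-2 * ∫ t in a..b, g t) * c
      + ∫ t in a..b, w t * g t ^ 2 := by
    intro c
    have hsq : ∀ t ∈ Icc a b, (w t)⁻¹ * (c * c) + -2 * g t * c + w t * g t ^ 2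
        = w t * (g t - c * (w t)⁻¹) ^ 2 := fun t ht => by
      field_simp [(hw t ht).ne']
      ring
    calc 0 ≤ ∫ t in a..b, (w t)⁻¹ * (c * c) + -2 * g t * c + w t * g t ^ 2 :=
          integral_nonneg hab fun t ht => (hsq t ht).symm ▸ mul_nonneg (hw t ht).le (sq_nonneg _)
      _ = _ := by
          rw [integral_add ((hw_inv.mul_const _).add ((hg.const_mul _).mul_const _)) hwg,
            integral_add (hw_inv.mul_const _) ((hg.const_mul _).mul_const _),
            intervalIntegral.integral_mul_const, intervalIntegral.integral_mul_const,
            intervalIntegral.integral_const_mul]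
  have hdiscrim := discrim_le_zero hquad
  rw [discrim] at hdiscrim
  linarith

theorem integral_deriv_mul_eq_neg_integral_mul_deriv_of_tendsto {u u' v v' : ℝ → ℝ} {a b : ℝ}
    (hab : a < b) (hu : ∀ x ∈ Ioo a b, HasDerivAt u (u' x) x)
    (hv : ∀ x ∈ Ioo a b, HasDerivAt v (v' x) x)
    (hu'v : IntervalIntegrable (fun x => u' x * v x) volume a b)
    (huv' : IntervalIntegrable (fun x => u x * v' x) volume a b)
    (ha : Tendsto (fun x => u x * v x) (𝓝[>] a) (𝓝 0))
    (hb : Tendsto (fun x => u x * v x) (𝓝[<] b) (𝓝 0)) :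
    ∫ x in a..b, u' x * v x = -∫ x in a..b, u x * v' x := by
  have h := integral_eq_sub_of_hasDerivAt_of_tendsto hab (fun x hx => (hu x hx).mul (hv x hx))
    (hu'v.add huv') ha hb
  rw [integral_add hu'v huv', sub_self] at h
  linarith

theorem sq_sub_le_integral_rpow_neg_mul_integral_rpow_mul_sq {v v' : ℝ → ℝ} {a b β : ℝ}
    (ha : 0 < a) (hab : a ≤ b) (hv : ContinuousOn v (Icc a b))
    (hderiv : ∀ x ∈ Ioo a b, HasDerivAt v (v' x) x) (hv' : ContinuousOn v' (Icc a b)) :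
    (v b - v a) ^ 2 ≤ (∫ t in a..b, t ^ (-β)) * ∫ t in a..b, t ^ β * v' t ^ 2 := by
  have hpos : ∀ t ∈ Icc a b, 0 < t := fun t ht => ha.trans_le ht.1
  have hrpow : ∀ r : ℝ, ContinuousOn (fun t : ℝ => t ^ r) (Icc a b) := fun r =>
    continuousOn_id.rpow_const fun t ht => Or.inl (hpos t ht).ne'
  have hinv : EqOn (fun t : ℝ => (t ^ β)⁻¹) (fun t => t ^ (-β)) (uIcc a b) := fun t ht =>
    (Real.rpow_neg (hpos t (uIcc_of_le hab ▸ ht)).le β).symm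
  rw [← integral_eq_sub_of_hasDerivAt_of_le hab hv hderiv (hv'.intervalIntegrable_of_Icc hab),
    ← integral_congr hinv]
  exact sq_integral_le_integral_inv_mul_integral_mul_sq hab
    (fun t ht => Real.rpow_pos_of_pos (hpos t ht) β)
    (((hrpow β).inv₀ fun t ht => (Real.rpow_pos_of_pos (hpos t ht) β).ne').intervalIntegrable_of_Icc
      hab)
    (hv'.intervalIntegrable_of_Icc hab) (((hrpow β).mul (hv'.pow 2)).intervalIntegrable_of_Icc hab)

section Hardy

variable {β : ℝ}

theorem integral_rpow_neg_of_ne_one (hβ1 : β ≠ 1) {x : ℝ} (hx : 0 < x) :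
    ∫ t in x..1, t ^ (-β) = (1 - x ^ (1 - β)) / (1 - β) := by
  have hne : -β ≠ -1 := fun h => hβ1 (neg_inj.mp h)
  rw [integral_rpow (Or.inr ⟨hne, notMem_uIcc_of_lt hx one_pos⟩), Real.one_rpow, neg_add_eq_sub]

theorem integral_one_sub_rpow_div_one_sub (hβ2 : β < 2) (hβ1 : β ≠ 1) :
    ∫ x in (0 : ℝ)..1, (1 - x ^ (1 - β)) / (1 - β) = 1 / (2 - β) := by
  have h1 : (1 : ℝ) - β ≠ 0 := sub_ne_zero.mpr hβ1.symm
  have h2 : (2 : ℝ) - β ≠ 0 := sub_ne_zero.mpr hβ2.ne'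
  rw [intervalIntegral.integral_div,
    integral_sub intervalIntegrable_const (intervalIntegrable_rpow' (by linarith)),
    intervalIntegral.integral_const, integral_rpow (Or.inl (by linarith)),
    show 1 - β + 1 = 2 - β by ring, Real.one_rpow, Real.zero_rpow h2]
  field_simp
  ring

variable {v v' : ℝ → ℝ}

theorem sq_le_mul_integral_rpow_mul_deriv_sq (hβ1 : β ≠ 1) (hv : ContinuousOn v (Icc 0 1))
    (hderiv : ∀ x ∈ Ioo 0 1, HasDerivAt v (v' x) x) (hv' : ContinuousOn v' (Ioc 0 1))
    (hv1 : v 1 = 0) (henergy : IntervalIntegrable (fun x => x ^ β * v' x ^ 2) volume 0 1)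
    {x : ℝ} (hx : x ∈ Ioc 0 1) :
    v x ^ 2 ≤ (1 - x ^ (1 - β)) / (1 - β) * ∫ t in (0 : ℝ)..1, t ^ β * v' t ^ 2 := by
  obtain ⟨hx0, hx1⟩ := hx
  have hweight_nonneg : 0 ≤ ∫ t in x..1, t ^ (-β) :=
    integral_nonneg hx1 fun t ht => Real.rpow_nonneg (hx0.le.trans ht.1) _
  have henergy_mono : ∫ t in x..1, t ^ β * v' t ^ 2 ≤ ∫ t in (0 : ℝ)..1, t ^ β * v' t ^ 2 := by
    refine integral_mono_interval hx0.le hx1 le_rfl ?_ henergy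
    filter_upwards [ae_restrict_mem measurableSet_Ioc] with t ht
    exact mul_nonneg (Real.rpow_nonneg ht.1.le _) (sq_nonneg _)
  calc v x ^ 2 = (v 1 - v x) ^ 2 := by rw [hv1]; ring
    _ ≤ (∫ t in x..1, t ^ (-β)) * ∫ t in x..1, t ^ β * v' t ^ 2 :=
        sq_sub_le_integral_rpow_neg_mul_integral_rpow_mul_sq hx0 hx1
          (hv.mono (Icc_subset_Icc hx0.le le_rfl)) (fun t ht => hderiv t ⟨hx0.trans ht.1, ht.2⟩)
          (hv'.mono fun t ht => ⟨hx0.trans_le ht.1, ht.2⟩)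
    _ ≤ (∫ t in x..1, t ^ (-β)) * ∫ t in (0 : ℝ)..1, t ^ β * v' t ^ 2 :=
        mul_le_mul_of_nonneg_left henergy_mono hweight_nonneg
    _ = _ := by rw [integral_rpow_neg_of_ne_one hβ1 hx0]

theorem two_sub_mul_integral_sq_le_integral_rpow_mul_deriv_sq (hβ2 : β < 2) (hβ1 : β ≠ 1)
    (hv : ContinuousOn v (Icc 0 1)) (hderiv : ∀ x ∈ Ioo 0 1, HasDerivAt v (v' x) x)
    (hv' : ContinuousOn v' (Ioc 0 1)) (hv1 : v 1 = 0)
    (henergy : IntervalIntegrable (fun x => x ^ β * v' x ^ 2) volume 0 1) :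
    (2 - β) * ∫ x in (0 : ℝ)..1, v x ^ 2 ≤ ∫ x in (0 : ℝ)..1, x ^ β * v' x ^ 2 := by
  set E := ∫ x in (0 : ℝ)..1, x ^ β * v' x ^ 2
  have hmono : ∫ x in (0 : ℝ)..1, v x ^ 2 ≤ ∫ x in (0 : ℝ)..1, (1 - x ^ (1 - β)) / (1 - β) * E := by
    refine integral_mono_ae_restrict zero_le_one
      ((hv.pow 2).intervalIntegrable_of_Icc zero_le_one)
      (((intervalIntegrable_const.sub (intervalIntegrable_rpow' (by linarith))).div_const _).mul_const
        _) ?_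
    rw [← Measure.restrict_congr_set Ioc_ae_eq_Icc]
    filter_upwards [ae_restrict_mem measurableSet_Ioc] with x hx
    exact sq_le_mul_integral_rpow_mul_deriv_sq hβ1 hv hderiv hv' hv1 henergy hx
  rw [intervalIntegral.integral_mul_const, integral_one_sub_rpow_div_one_sub hβ2 hβ1] at hmono
  calc (2 - β) * ∫ x in (0 : ℝ)..1, v x ^ 2 ≤ (2 - β) * (1 / (2 - β) * E) :=
        mul_le_mul_of_nonneg_left hmono (by linarith)
    _ = E := by field_simp [sub_ne_zero.mpr hβ2.ne']

end Hardy

theorem degenerate_operator_positive_definite_general (β : ℝ) (hβ2 : β < 2)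
    (hβ1 : β ≠ 1) (v v' w' : ℝ → ℝ)
    (hv : ContinuousOn v (Set.Icc 0 1))
    (hv' : ∀ x ∈ Set.Ioc (0 : ℝ) 1, HasDerivWithinAt v (v' x) (Set.Ioc 0 1) x)
    (hv'c : ContinuousOn v' (Set.Ioc 0 1))
    (hv1 : v 1 = 0)
    (hw' : ∀ x ∈ Set.Ioo (0 : ℝ) 1, HasDerivAt (fun y => y ^ β * v' y) (w' x) x)
    (hint : IntervalIntegrable (fun x => w' x * v x) volume 0 1)
    (henergy : IntervalIntegrable (fun x => x ^ β * v' x ^ 2) volume 0 1)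
    (hlim0 : Tendsto (fun x => x ^ β * v' x * v x) (nhdsWithin 0 (Set.Ioi 0)) (nhds 0)) :
    (2 - β) * (∫ x in (0 : ℝ)..1, v x ^ 2) ≤ -(∫ x in (0 : ℝ)..1, w' x * v x) := by
  have hderiv : ∀ x ∈ Ioo (0 : ℝ) 1, HasDerivAt v (v' x) x := fun x hx =>
    (hv' x ⟨hx.1, hx.2.le⟩).hasDerivAt (Ioc_mem_nhds hx.1 hx.2)
  have hlim1 : Tendsto (fun x => x ^ β * v' x * v x) (𝓝[<] 1) (𝓝 0) := by
    have hcont : ContinuousWithinAt (fun x : ℝ => x ^ β * v' x * v x) (Ioc 0 1) 1 :=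
      ((Real.continuousAt_rpow_const 1 β (Or.inl one_ne_zero)).continuousWithinAt.mul
        (hv'c 1 ⟨one_pos, le_rfl⟩)).mul (hv.mono Ioc_subset_Icc_self 1 ⟨one_pos, le_rfl⟩)
    rw [← nhdsWithin_Ioo_eq_nhdsLT one_pos]
    simpa [hv1] using hcont.tendsto.mono_left (nhdsWithin_mono _ Ioo_subset_Ioc_self)
  have hflux : (fun x => x ^ β * v' x * v' x) = fun x => x ^ β * v' x ^ 2 := by ext x; ring
  have hparts := integral_deriv_mul_eq_neg_integral_mul_deriv_of_tendsto one_pos hw' hderiv hint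
    (hflux ▸ henergy) hlim0 hlim1
  rw [hparts, hflux, neg_neg]
  exact two_sub_mul_integral_sq_le_integral_rpow_mul_deriv_sq hβ2 hβ1 hv hderiv hv'c hv1 henergy

/-- **Positive definiteness of the degenerate operator `A v = -(x^β v')'`.**
Let `0 < β < 2`, `β ≠ 1`, let `v` be continuous on `[0,1]`, continuously differentiable
on `(0,1]` with derivative `v'`, `v(1) = 0`, let `x^β v'` be differentiable on `(0,1)`
with derivative `w'`, let `(x^β v')'·v` be integrable on `(0,1)`, let
`∫_0^1 x^β (v')² dx < ∞`, and suppose `x^β v'(x) v(x) → 0` as `x → 0+`. Then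
`(A v, v)_{L²} = -∫_0^1 (x^β v')' v dx ≥ (2-β) ∫_0^1 v² dx`. -/
theorem degenerate_operator_positive_definite (β : ℝ) (hβ0 : 0 < β) (hβ2 : β < 2)
    (hβ1 : β ≠ 1) (v v' w' : ℝ → ℝ)
    (hv : ContinuousOn v (Set.Icc 0 1))
    (hv' : ∀ x ∈ Set.Ioc (0 : ℝ) 1, HasDerivWithinAt v (v' x) (Set.Ioc 0 1) x)
    (hv'c : ContinuousOn v' (Set.Ioc 0 1))
    (hv1 : v 1 = 0)
    (hw' : ∀ x ∈ Set.Ioo (0 : ℝ) 1, HasDerivAt (fun y => y ^ β * v' y) (w' x) x)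
    (hint : IntervalIntegrable (fun x => w' x * v x) volume 0 1)
    (henergy : IntervalIntegrable (fun x => x ^ β * v' x ^ 2) volume 0 1)
    (hlim0 : Tendsto (fun x => x ^ β * v' x * v x) (nhdsWithin 0 (Set.Ioi 0)) (nhds 0)) :
    (2 - β) * (∫ x in (0 : ℝ)..1, v x ^ 2) ≤ -(∫ x in (0 : ℝ)..1, w' x * v x) :=
  degenerate_operator_positive_definite_general β hβ2 hβ1 v v' w' hv hv' hv'c hv1 hw' hint henergy
    hlim0
end

section
/- Let 0 < α < 1, λ ∈ ℝ, and x > 0. Then (1/Γ(1−α))·∫_0^x (x−u)^{−α} u^{α−1} E_{α,α}(λ u^α) du = E_{α,1}(λ x^α). -/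
/-!
Expanding `E_{α,α}` termwise, the `k`-th term of the integrand is a multiple of the Beta integrand
`u ^ (α k + α - 1) (x - u) ^ (-α)`, whose integral over `[0, x]` is
`x ^ (α k) Γ(α k + α) Γ(1 - α) / Γ(α k + 1)`; this turns the `k`-th term of `E_{α,α}(λ u ^ α)` into
`Γ(1 - α)` times the `k`-th term of `E_{α,1}(λ x ^ α)`. Sum and integral may be interchanged because
the norms of the terms are the same terms with `|λ|` in place of `λ`, and the series `E_{α,1}`
converges by the ratio test: log-convexity of `Γ` gives `Γ(s) / Γ(s + α) ≤ (s + α) ^ (1 - α) / s`.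
-/

open MeasureTheory intervalIntegral

open Real Filter Topology

theorem integral_rpow_mul_sub_rpow {p q a : ℝ} (hp : 0 < p) (hq : 0 < q) (ha : 0 < a) :
    ∫ u in (0 : ℝ)..a, u ^ (p - 1) * (a - u) ^ (q - 1) =
      a ^ (p + q - 1) * ProbabilityTheory.beta p q := by
  apply Complex.ofReal_injective
  calc ((∫ u in (0 : ℝ)..a, u ^ (p - 1) * (a - u) ^ (q - 1) : ℝ) : ℂ)
      = ∫ u in (0 : ℝ)..a, (u : ℂ) ^ ((p : ℂ) - 1) * ((a : ℂ) - u) ^ ((q : ℂ) - 1) := by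
        rw [← intervalIntegral.integral_ofReal]
        refine integral_congr fun u hu => ?_
        rw [Set.uIcc_of_le ha.le] at hu
        push_cast [Complex.ofReal_cpow hu.1, Complex.ofReal_cpow (sub_nonneg.2 hu.2)]
        rfl
    _ = (a : ℂ) ^ ((p : ℂ) + q - 1) * Complex.betaIntegral p q := Complex.betaIntegral_scaled _ _ ha
    _ = _ := by
        rw [Complex.betaIntegral_eq_Gamma_mul_div _ _ (by simpa) (by simpa),
          ProbabilityTheory.beta]
        push_cast [Complex.ofReal_cpow ha.le, ← Complex.Gamma_ofReal]
        rfl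

theorem intervalIntegrable_rpow_mul_sub_rpow {p q a : ℝ} (hp : 0 < p) (hq : 0 < q) (ha : 0 < a) :
    IntervalIntegrable (fun u => u ^ (p - 1) * (a - u) ^ (q - 1)) volume 0 a :=
  intervalIntegrable_of_integral_ne_zero <| by
    rw [integral_rpow_mul_sub_rpow hp hq ha]
    exact (mul_pos (Real.rpow_pos_of_pos ha _) (ProbabilityTheory.beta_pos hp hq)).ne'

theorem mul_Gamma_le_rpow_mul_Gamma_add {s α : ℝ} (hs : 0 < s) (hα0 : 0 < α) (hα1 : α < 1) :
    s * Gamma s ≤ (s + α) ^ (1 - α) * Gamma (s + α) := by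
  have hsα : 0 < s + α := by linarith
  have hG : 0 < Gamma (s + α) := Gamma_pos_of_pos hsα
  -- log-convexity of `Γ` on `[s + α, s + α + 1]`, evaluated at `s + 1`
  have hconv := Gamma_mul_add_mul_le_rpow_Gamma_mul_rpow_Gamma hsα (by linarith : 0 < s + α + 1)
    hα0 (by linarith : 0 < 1 - α) (by ring)
  rw [show α * (s + α) + (1 - α) * (s + α + 1) = s + 1 by ring, Gamma_add_one hs.ne',
    Gamma_add_one hsα.ne', mul_rpow hsα.le hG.le] at hconv
  calc s * Gamma s ≤ Gamma (s + α) ^ α * ((s + α) ^ (1 - α) * Gamma (s + α) ^ (1 - α)) := hconv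
    _ = (s + α) ^ (1 - α) * Gamma (s + α) := by
        rw [mul_left_comm, ← rpow_add hG, add_sub_cancel, rpow_one]

theorem tendsto_Gamma_div_Gamma_add_atTop {α : ℝ} (hα0 : 0 < α) (hα1 : α < 1) :
    Tendsto (fun s => Gamma s / Gamma (s + α)) atTop (𝓝 0) := by
  have hbound : Tendsto (fun s : ℝ => 2 ^ (1 - α) * s ^ (-α)) atTop (𝓝 0) := by
    simpa using (tendsto_rpow_neg_atTop hα0).const_mul (2 ^ (1 - α))
  refine tendsto_of_tendsto_of_tendsto_of_le_of_le' tendsto_const_nhds hbound ?_ ?_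
  · filter_upwards [eventually_gt_atTop 0] with s hs
    exact div_nonneg (Gamma_pos_of_pos hs).le (Gamma_pos_of_pos (by linarith)).le
  filter_upwards [eventually_ge_atTop α, eventually_gt_atTop 0] with s hsα hs
  have hG : 0 < Gamma (s + α) := Gamma_pos_of_pos (by linarith)
  rw [div_le_iff₀ hG]
  calc Gamma s = s * Gamma s / s := by field_simp
    _ ≤ (s + α) ^ (1 - α) * Gamma (s + α) / s :=
        div_le_div_of_nonneg_right (mul_Gamma_le_rpow_mul_Gamma_add hs hα0 hα1) hs.le
    _ ≤ (2 * s) ^ (1 - α) * Gamma (s + α) / s := by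
        gcongr; linarith
    _ = 2 ^ (1 - α) * s ^ (-α) * Gamma (s + α) := by
        rw [mul_rpow zero_le_two hs.le, rpow_sub hs, rpow_one, rpow_neg hs.le]
        field_simp

theorem summable_pow_div_Gamma_mul_add {α : ℝ} (hα0 : 0 < α) (hα1 : α < 1) (β y : ℝ) :
    Summable fun k : ℕ => y ^ k / Gamma (α * k + β) := by
  rcases eq_or_ne y 0 with rfl | hy
  · exact summable_of_ne_finset_zero (s := {0}) fun k hk => by simp_all
  have hlin : Tendsto (fun k : ℕ => α * k + β) atTop atTop :=
    tendsto_atTop_add_const_right _ β (tendsto_natCast_atTop_atTop.const_mul_atTop hα0)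
  have hpos : ∀ᶠ k : ℕ in atTop, 0 < α * k + β := hlin.eventually_gt_atTop 0
  refine summable_of_ratio_test_tendsto_lt_one zero_lt_one
    (hpos.mono fun k hk => div_ne_zero (pow_ne_zero k hy) (Gamma_pos_of_pos hk).ne') ?_
  have hratio := ((tendsto_Gamma_div_Gamma_add_atTop hα0 hα1).comp hlin).const_mul |y|
  rw [mul_zero] at hratio
  refine hratio.congr' ?_
  filter_upwards [hpos] with k hk
  have hk' : α * ((k + 1 : ℕ) : ℝ) + β = α * k + β + α := by push_cast; ring
  have hG : 0 < Gamma (α * k + β) := Gamma_pos_of_pos hk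
  have hG' : 0 < Gamma (α * k + β + α) := Gamma_pos_of_pos (by linarith)
  rw [hk', Function.comp_apply, norm_div, norm_div, norm_pow, norm_pow, Real.norm_eq_abs,
    Real.norm_of_nonneg hG.le, Real.norm_of_nonneg hG'.le]
  field_simp
  ring

noncomputable def mittagLefflerKernelTerm (α x c : ℝ) (k : ℕ) (u : ℝ) : ℝ :=
  (x - u) ^ (-α) * u ^ (α - 1) * ((c * u ^ α) ^ k / Gamma (α * k + α))

section MittagLefflerKernelTerm

variable {α x : ℝ} (c : ℝ) (k : ℕ)

theorem tsum_mittagLefflerKernelTerm (u : ℝ) :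
    ∑' k, mittagLefflerKernelTerm α x c k u = (x - u) ^ (-α) * u ^ (α - 1) * ML α α (c * u ^ α) :=
  tsum_mul_left

theorem mittagLefflerKernelTerm_eq {u : ℝ} (hu : 0 < u) :
    mittagLefflerKernelTerm α x c k u =
      c ^ k / Gamma (α * k + α) * (u ^ ((α * k + α) - 1) * (x - u) ^ ((1 - α) - 1)) := by
  rw [mittagLefflerKernelTerm, mul_pow, ← rpow_natCast (u ^ α), ← rpow_mul hu.le,
    show α * k + α - 1 = α * k + (α - 1) by ring, rpow_add hu, sub_sub_cancel_left]
  ring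

theorem norm_mittagLefflerKernelTerm (hα0 : 0 < α) {u : ℝ} (hu : u ∈ Set.Icc 0 x) :
    ‖mittagLefflerKernelTerm α x c k u‖ = mittagLefflerKernelTerm α x |c| k u := by
  simp only [mittagLefflerKernelTerm, norm_mul, norm_div, norm_pow, Real.norm_eq_abs,
    abs_of_nonneg (rpow_nonneg (sub_nonneg.2 hu.2) _), abs_of_nonneg (rpow_nonneg hu.1 _),
    abs_of_pos (Gamma_pos_of_pos (by positivity : 0 < α * k + α))]

theorem intervalIntegrable_mittagLefflerKernelTerm (hα0 : 0 < α) (hα1 : α < 1) (hx : 0 < x) :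
    IntervalIntegrable (mittagLefflerKernelTerm α x c k) volume 0 x :=
  ((intervalIntegrable_rpow_mul_sub_rpow (p := α * k + α) (q := 1 - α) (by positivity)
    (by linarith) hx).const_mul (c ^ k / Gamma (α * k + α))).congr fun u hu =>
      (mittagLefflerKernelTerm_eq c k (Set.uIoc_of_le hx.le ▸ hu).1).symm

theorem integral_mittagLefflerKernelTerm (hα0 : 0 < α) (hα1 : α < 1) (hx : 0 < x) :
    ∫ u in (0 : ℝ)..x, mittagLefflerKernelTerm α x c k u =
      Gamma (1 - α) * ((c * x ^ α) ^ k / Gamma (α * k + 1)) := by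
  have hp : 0 < α * k + α := by positivity
  calc ∫ u in (0 : ℝ)..x, mittagLefflerKernelTerm α x c k u
      = ∫ u in (0 : ℝ)..x, c ^ k / Gamma (α * k + α) *
          (u ^ ((α * k + α) - 1) * (x - u) ^ ((1 - α) - 1)) :=
        intervalIntegral.integral_congr_ae <| ae_of_all _ fun u hu =>
          mittagLefflerKernelTerm_eq c k (Set.uIoc_of_le hx.le ▸ hu).1
    _ = _ := by
      rw [intervalIntegral.integral_const_mul, integral_rpow_mul_sub_rpow hp (by linarith) hx,
        ProbabilityTheory.beta, show α * k + α + (1 - α) = α * k + 1 by ring,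
        add_sub_cancel_right, mul_pow, ← rpow_natCast (x ^ α), ← rpow_mul hx.le]
      field_simp [(Gamma_pos_of_pos hp).ne']

end MittagLefflerKernelTerm

/-- **Riemann–Liouville fractional integral of the Mittag-Leffler kernel.**
For `0 < α < 1`, `λ ∈ ℝ` and `x > 0`:
`(1/Γ(1-α)) ∫_0^x (x-u)^{-α} u^{α-1} E_{α,α}(λ u^α) du = E_{α,1}(λ x^α)`. -/
theorem riemannLiouville_integral_mittagLeffler (α lam x : ℝ)
    (hα0 : 0 < α) (hα1 : α < 1) (hx : 0 < x) :
    (1 / Real.Gamma (1 - α)) *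
        (∫ u in (0 : ℝ)..x, (x - u) ^ (-α) * u ^ (α - 1) * ML α α (lam * u ^ α)) =
      ML α 1 (lam * x ^ α) := by
  have hterms : ∀ c, HasSum (fun k => ∫ u in (0 : ℝ)..x, mittagLefflerKernelTerm α x c k u)
      (Real.Gamma (1 - α) * ML α 1 (c * x ^ α)) := fun c => by
    simp only [integral_mittagLefflerKernelTerm c _ hα0 hα1 hx]
    exact (summable_pow_div_Gamma_mul_add hα0 hα1 1 (c * x ^ α)).hasSum.mul_left _
  have hswap : HasSum (fun k => ∫ u in (0 : ℝ)..x, mittagLefflerKernelTerm α x lam k u)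
      (∫ u in (0 : ℝ)..x, ∑' k, mittagLefflerKernelTerm α x lam k u) := by
    simp only [intervalIntegral.integral_of_le hx.le]
    refine hasSum_integral_of_summable_integral_norm
      (fun k => (intervalIntegrable_mittagLefflerKernelTerm lam k hα0 hα1 hx).1) ?_
    refine (hterms |lam|).summable.congr fun k => ?_
    rw [intervalIntegral.integral_of_le hx.le]
    exact setIntegral_congr_fun measurableSet_Ioc fun u hu =>
      (norm_mittagLefflerKernelTerm lam k hα0 (Set.Ioc_subset_Icc_self hu)).symm
  simp only [tsum_mittagLefflerKernelTerm] at hswap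
  rw [hswap.unique (hterms lam), one_div,
    inv_mul_cancel_left₀ (Gamma_pos_of_pos (by linarith : 0 < 1 - α)).ne']
end

section
/- Let 0 < α < 1 and λ ∈ ℝ. Then for every x > 0, the function x ↦ E_{α,1}(λ x^α) is differentiable at x with derivative λ x^{α−1} E_{α,α}(λ x^α). -/
/-!
Since `Γ` grows faster than any exponential, the series `E_{α,β}` converges everywhere, so it
may be differentiated termwise. By `Γ(α(k+1)+1) = (αk+α) Γ(αk+α)` the derivative of the
`(k+1)`-st term of `E_{α,1}(w)` is `α⁻¹ w^k / Γ(αk+α)`, i.e. `E_{α,1}' = α⁻¹ E_{α,α}`; the chain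
rule with `(x^α)' = α x^{α-1}` then gives the theorem.
-/

open Real Metric

-- `Γ x ≥ Γ ⌊x⌋ = (⌊x⌋ - 1)!` and `n! ≥ cⁿ / eᶜ`.
lemma Real.pow_sub_two_div_exp_le_Gamma {c x : ℝ} (hc : 1 ≤ c) (hx : 2 ≤ x) :
    c ^ (x - 2) / exp c ≤ Gamma x := by
  set m := ⌊x⌋₊
  have hm : 2 ≤ m := Nat.le_floor (by exact_mod_cast hx)
  have hGamma_floor : Gamma m ≤ Gamma x :=
    Gamma_strictMonoOn_Ici.monotoneOn (show (2 : ℝ) ≤ m by exact_mod_cast hm)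
      hx (Nat.floor_le (by linarith))
  have hfactorial : c ^ (m - 1) / exp c ≤ (m - 1).factorial := by
    rw [div_le_iff₀ (exp_pos c)]
    have := pow_div_factorial_le_exp c (by linarith) (m - 1)
    rwa [div_le_iff₀ (by positivity), mul_comm] at this
  have hexponent : x - 2 ≤ ((m - 1 : ℕ) : ℝ) := by
    rw [Nat.cast_sub (by omega), Nat.cast_one]
    linarith [Nat.lt_floor_add_one x]
  calc c ^ (x - 2) / exp c ≤ c ^ (m - 1) / exp c := by
        gcongr
        rw [← rpow_natCast]
        exact rpow_le_rpow_of_exponent_le hc hexponent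
    _ ≤ (m - 1).factorial := hfactorial
    _ = Gamma m := by rw [← Gamma_nat_eq_factorial, Nat.cast_sub (by omega), Nat.cast_one,
        sub_add_cancel]
    _ ≤ Gamma x := hGamma_floor

lemma summable_pow_div_Gamma {α : ℝ} (hα : 0 < α) (β r : ℝ) :
    Summable fun k : ℕ => r ^ k / Gamma (α * k + β) := by
  -- `c ^ α = 2|r| + 1`, so that `Γ(αk+β) ≥ c^(β-2) e^(-c) (2|r|+1)^k`
  set c := (2 * |r| + 1) ^ α⁻¹
  have hr : 1 ≤ 2 * |r| + 1 := by linarith [abs_nonneg r]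
  have hc : 1 ≤ c := one_le_rpow hr (by positivity)
  have hcα : c ^ α = 2 * |r| + 1 := by
    rw [← rpow_mul (by linarith), inv_mul_cancel₀ hα.ne', rpow_one]
  set C := exp c * c ^ (2 - β)
  have hlarge : ∀ᶠ k : ℕ in Filter.atTop, 2 ≤ α * k + β :=
    (Filter.tendsto_atTop_add_const_right _ β
      (tendsto_natCast_atTop_atTop.const_mul_atTop hα)).eventually_ge_atTop 2
  refine Summable.of_norm_bounded_eventually_nat
    ((summable_geometric_two).mul_left C) ?_
  filter_upwards [hlarge] with k hk
  have hGamma : (2 * |r| + 1) ^ k / C ≤ Gamma (α * k + β) := by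
    convert pow_sub_two_div_exp_le_Gamma hc hk using 1
    have hc0 : 0 < c := by linarith
    simp only [C]
    rw [rpow_sub hc0, rpow_sub hc0, rpow_add hc0, rpow_mul hc0.le, hcα, rpow_natCast]
    field_simp
  have hC : 0 < C := by positivity
  rw [norm_div, norm_pow, Real.norm_eq_abs, Real.norm_eq_abs,
    abs_of_pos ((by positivity : (0 : ℝ) < _ ).trans_le hGamma)]
  calc |r| ^ k / Gamma (α * k + β) ≤ |r| ^ k / ((2 * |r| + 1) ^ k / C) := by gcongr
    _ = C * (|r| / (2 * |r| + 1)) ^ k := by rw [div_pow]; field_simp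
    _ ≤ C * (1 / 2) ^ k := by
        gcongr C * ?_ ^ k
        rw [div_le_div_iff₀ (by linarith) two_pos]
        linarith [abs_nonneg r]

lemma hasDerivAt_pow_succ_div_Gamma {α : ℝ} (hα : 0 < α) (k : ℕ) (w : ℝ) :
    HasDerivAt (fun v => v ^ (k + 1) / Gamma (α * ↑(k + 1) + 1))
      (α⁻¹ * (w ^ k / Gamma (α * k + α))) w := by
  have hpos : 0 < α * k + α := by positivity
  have hGamma : Gamma (α * ↑(k + 1) + 1) = (α * k + α) * Gamma (α * k + α) := by
    rw [← Gamma_add_one hpos.ne']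
    push_cast
    ring_nf
  refine ((hasDerivAt_pow (k + 1) w).div_const _).congr_deriv ?_
  rw [hGamma, Nat.add_sub_cancel]
  push_cast
  field_simp

lemma hasDerivAt_ML_one {α : ℝ} (hα : 0 < α) (w : ℝ) :
    HasDerivAt (ML α 1) (α⁻¹ * ML α α w) w := by
  have hsplit : ML α 1 = fun v => 1 + ∑' k : ℕ, v ^ (k + 1) / Gamma (α * ↑(k + 1) + 1) := by
    ext v
    rw [ML, (summable_pow_div_Gamma hα 1 v).tsum_eq_zero_add]
    simp
  set R := |w| + 1
  have hderiv : HasDerivAt (fun v => ∑' k : ℕ, v ^ (k + 1) / Gamma (α * ↑(k + 1) + 1))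
      (∑' k : ℕ, α⁻¹ * (w ^ k / Gamma (α * k + α))) w := by
    refine hasDerivAt_tsum_of_isPreconnected ((summable_pow_div_Gamma hα α R).mul_left α⁻¹)
      isOpen_ball (convex_ball 0 R).isPreconnected
      (fun k v _ => hasDerivAt_pow_succ_div_Gamma hα k v) (fun k v hv => ?_) (y₀ := w)
      (by simp [R]) ((summable_nat_add_iff 1).2 (summable_pow_div_Gamma hα 1 w)) (by simp [R])
    have hv : |v| ≤ R := by simpa using (mem_ball_zero_iff.1 hv).le
    have hpos : 0 < Gamma (α * k + α) := Gamma_pos_of_pos (by positivity)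
    rw [norm_mul, norm_div, norm_pow, Real.norm_eq_abs, Real.norm_eq_abs, Real.norm_eq_abs,
      abs_of_pos hpos, abs_of_pos (inv_pos.2 hα)]
    gcongr
  rw [hsplit, ML, ← tsum_mul_left]
  exact hderiv.const_add _

theorem hasDerivAt_mittagLeffler_relaxation_general (α lam x : ℝ)
    (hα0 : 0 < α) (hx : 0 < x) :
    HasDerivAt (fun y => ML α 1 (lam * y ^ α))
      (lam * x ^ (α - 1) * ML α α (lam * x ^ α)) x := by
  have hinner : HasDerivAt (fun y => lam * y ^ α) (lam * (α * x ^ (α - 1))) x :=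
    (hasDerivAt_rpow_const (Or.inl hx.ne')).const_mul lam
  refine ((hasDerivAt_ML_one hα0 (lam * x ^ α)).comp x hinner).congr_deriv ?_
  field_simp

/-- **Derivative of the Mittag-Leffler relaxation function.** For `0 < α < 1`,
`λ ∈ ℝ` and `x > 0`, the function `x ↦ E_{α,1}(λ x^α)` is differentiable at `x`
with derivative `λ x^{α-1} E_{α,α}(λ x^α)`. -/
theorem hasDerivAt_mittagLeffler_relaxation (α lam x : ℝ)
    (hα0 : 0 < α) (hα1 : α < 1) (hx : 0 < x) :
    HasDerivAt (fun y => ML α 1 (lam * y ^ α))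
      (lam * x ^ (α - 1) * ML α α (lam * x ^ α)) x :=
  hasDerivAt_mittagLeffler_relaxation_general α lam x hα0 hx
end
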